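/- The circumradius of a simplex of positive volume with squared edge lengths x1,...,x6 equals (1/2)·(ρ(x1,...,x6)/Δ(x1,...,x6))^(1/2). -/
import Mathlib


noncomputable section
open MeasureTheory
open scoped RealInnerProductSpace

def Delta (x1 x2 x3 x4 x5 x6 : ℝ) : ℝ :=
  x1*x4*(-x1+x2+x3-x4+x5+x6) + x2*x5*(x1-x2+x3+x4-x5+x6) +
  x3*x6*(x1+x2-x3+x4+x5-x6) - x2*x3*x4 - x1*x3*x5 - x1*x2*x6 - x4*x5*x6

def rho (x1 x2 x3 x4 x5 x6 : ℝ) : ℝ :=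
  -x1^2*x4^2 - x2^2*x5^2 - x3^2*x6^2 +
  2*x1*x2*x4*x5 + 2*x1*x3*x4*x6 + 2*x2*x3*x5*x6

def SimplexEdges (v0 v1 v2 v3 : EuclideanSpace ℝ (Fin 3))
    (y1 y2 y3 y4 y5 y6 : ℝ) : Prop :=
  dist v0 v1 = y1 ∧ dist v0 v2 = y2 ∧ dist v0 v3 = y3 ∧
  dist v2 v3 = y4 ∧ dist v1 v3 = y5 ∧ dist v1 v2 = y6

/-- The circumradius of a simplex of positive volume with squared edge lengths
x1,...,x6 equals (1/2)·√(ρ/Δ). -/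
theorem circumradius_eq
    (y1 y2 y3 y4 y5 y6 : ℝ) (v0 v1 v2 v3 : EuclideanSpace ℝ (Fin 3))
    (hedges : SimplexEdges v0 v1 v2 v3 y1 y2 y3 y4 y5 y6)
    (hvol : 0 < volume (convexHull ℝ ({v0, v1, v2, v3} : Set (EuclideanSpace ℝ (Fin 3)))))
    (c : EuclideanSpace ℝ (Fin 3)) (r : ℝ)
    (hc0 : dist c v0 = r) (hc1 : dist c v1 = r)
    (hc2 : dist c v2 = r) (hc3 : dist c v3 = r) :
    r = (1/2) * Real.sqrt
      (rho (y1^2) (y2^2) (y3^2) (y4^2) (y5^2) (y6^2) /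
        Delta (y1^2) (y2^2) (y3^2) (y4^2) (y5^2) (y6^2)) := by
  obtain ⟨he1, he2, he3, he4, he5, he6⟩ := hedges
  set w1 : EuclideanSpace ℝ (Fin 3) := v1 - v0 with hw1
  set w2 : EuclideanSpace ℝ (Fin 3) := v2 - v0 with hw2
  set w3 : EuclideanSpace ℝ (Fin 3) := v3 - v0 with hw3
  set u : EuclideanSpace ℝ (Fin 3) := c - v0 with hu
  set a : ℝ := ⟪w1, w1⟫ with ha
  set b : ℝ := ⟪w2, w2⟫ with hb
  set cc : ℝ := ⟪w3, w3⟫ with hcc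
  set d : ℝ := ⟪w1, w2⟫ with hd
  set e : ℝ := ⟪w1, w3⟫ with he
  set f : ℝ := ⟪w2, w3⟫ with hf
  have hd' : ⟪w2, w1⟫ = d := real_inner_comm _ _
  have he' : ⟪w3, w1⟫ = e := real_inner_comm _ _
  have hf' : ⟪w3, w2⟫ = f := real_inner_comm _ _
  -- squared edge lengths
  have hy1 : y1^2 = a := by
    rw [← he1, dist_comm, dist_eq_norm, ha, real_inner_self_eq_norm_sq]
  have hy2 : y2^2 = b := by
    rw [← he2, dist_comm, dist_eq_norm, hb, real_inner_self_eq_norm_sq]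
  have hy3 : y3^2 = cc := by
    rw [← he3, dist_comm, dist_eq_norm, hcc, real_inner_self_eq_norm_sq]
  have hy4 : y4^2 = b + cc - 2*f := by
    have : v2 - v3 = w2 - w3 := by rw [hw2, hw3]; abel
    rw [← he4, dist_eq_norm, this, norm_sub_sq_real, ← hf,
      ← real_inner_self_eq_norm_sq, ← real_inner_self_eq_norm_sq, ← hb, ← hcc]; ring
  have hy5 : y5^2 = a + cc - 2*e := by
    have : v1 - v3 = w1 - w3 := by rw [hw1, hw3]; abel
    rw [← he5, dist_eq_norm, this, norm_sub_sq_real, ← he,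
      ← real_inner_self_eq_norm_sq, ← real_inner_self_eq_norm_sq, ← ha, ← hcc]; ring
  have hy6 : y6^2 = a + b - 2*d := by
    have : v1 - v2 = w1 - w2 := by rw [hw1, hw2]; abel
    rw [← he6, dist_eq_norm, this, norm_sub_sq_real, ← hd,
      ← real_inner_self_eq_norm_sq, ← real_inner_self_eq_norm_sq, ← ha, ← hb]; ring
  -- affine span is top
  have hr0 : 0 ≤ r := hc0 ▸ dist_nonneg
  have hspan : affineSpan ℝ ({v0, v1, v2, v3} : Set (EuclideanSpace ℝ (Fin 3))) = ⊤ := by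
    by_contra h
    have h0 : volume (convexHull ℝ ({v0, v1, v2, v3} : Set (EuclideanSpace ℝ (Fin 3)))) = 0 :=
      measure_mono_null (convexHull_subset_affineSpan _)
        (MeasureTheory.Measure.addHaar_affineSubspace _ _ h)
    rw [h0] at hvol; exact lt_irrefl _ hvol
  have hvspan : Submodule.span ℝ ({w1, w2, w3} : Set (EuclideanSpace ℝ (Fin 3))) = ⊤ := by
    have h1 : vectorSpan ℝ ({v0, v1, v2, v3} : Set (EuclideanSpace ℝ (Fin 3))) = ⊤ := by
      rw [← direction_affineSpan, hspan, AffineSubspace.direction_top]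
    rw [vectorSpan_eq_span_vsub_set_right ℝ
      (show v0 ∈ ({v0, v1, v2, v3} : Set (EuclideanSpace ℝ (Fin 3))) by simp)] at h1
    have h2 : (fun x => x -ᵥ v0) '' ({v0, v1, v2, v3} : Set (EuclideanSpace ℝ (Fin 3)))
        = insert 0 ({w1, w2, w3} : Set (EuclideanSpace ℝ (Fin 3))) := by
      simp only [Set.image_insert_eq, Set.image_singleton, vsub_eq_sub, sub_self,
        hw1, hw2, hw3]
    rw [h2, Submodule.span_insert_zero] at h1
    exact h1
  have hrange : Set.range ![w1, w2, w3] = ({w1, w2, w3} : Set (EuclideanSpace ℝ (Fin 3))) := by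
    ext x
    simp [Matrix.range_cons, Matrix.range_empty]
    tauto
  have hindep : LinearIndependent ℝ ![w1, w2, w3] := by
    apply linearIndependent_of_top_le_span_of_card_eq_finrank
    · rw [hrange, hvspan]
    · simp [finrank_euclideanSpace_fin]
  -- decompose u
  obtain ⟨al, z1, hz1, hu1⟩ : ∃ al z, z ∈ Submodule.span ℝ ({w2, w3} :
      Set (EuclideanSpace ℝ (Fin 3))) ∧ u = al • w1 + z := by
    have : u ∈ Submodule.span ℝ ({w1, w2, w3} : Set (EuclideanSpace ℝ (Fin 3))) := by
      rw [hvspan]; trivial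
    exact Submodule.mem_span_insert.mp this
  obtain ⟨be, z2, hz2, hu2⟩ : ∃ be z, z ∈ Submodule.span ℝ ({w3} :
      Set (EuclideanSpace ℝ (Fin 3))) ∧ z1 = be • w2 + z := Submodule.mem_span_insert.mp hz1
  obtain ⟨ga, hu3⟩ : ∃ ga, ga • w3 = z2 := Submodule.mem_span_singleton.mp hz2
  have hurep : u = al • w1 + be • w2 + ga • w3 := by rw [hu1, hu2, ← hu3]; abel
  -- circumcenter equations
  have hC0 : ⟪u, u⟫ = r^2 := by
    rw [real_inner_self_eq_norm_sq, hu, ← dist_eq_norm, hc0]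
  have key : ∀ w : EuclideanSpace ℝ (Fin 3), dist c (v0 + w) = r →
      2 * ⟪u, w⟫ = ⟪w, w⟫ := by
    intro w hw
    have h1 : ‖u - w‖^2 = r^2 := by
      have : c - (v0 + w) = u - w := by rw [hu]; abel
      rw [← this, ← dist_eq_norm, hw]
    rw [norm_sub_sq_real, ← real_inner_self_eq_norm_sq, ← real_inner_self_eq_norm_sq, hC0] at h1
    linarith
  have hC1 : 2 * ⟪u, w1⟫ = a := by
    apply key; rw [show v0 + w1 = v1 by rw [hw1]; abel]; exact hc1
  have hC2 : 2 * ⟪u, w2⟫ = b := by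
    apply key; rw [show v0 + w2 = v2 by rw [hw2]; abel]; exact hc2
  have hC3 : 2 * ⟪u, w3⟫ = cc := by
    apply key; rw [show v0 + w3 = v3 by rw [hw3]; abel]; exact hc3
  -- expand in coordinates al be ga
  have hE1 : al * a + be * d + ga * e = a / 2 := by
    have := hC1
    rw [hurep] at this
    simp only [inner_add_left, real_inner_smul_left, hd', he'] at this
    rw [← ha] at this; linarith
  have hE2 : al * d + be * b + ga * f = b / 2 := by
    have := hC2
    rw [hurep] at this
    simp only [inner_add_left, real_inner_smul_left, hf'] at this
    rw [← hd, ← hb] at this; linarith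
  have hE3 : al * e + be * f + ga * cc = cc / 2 := by
    have := hC3
    rw [hurep] at this
    simp only [inner_add_left, real_inner_smul_left] at this
    rw [← he, ← hf, ← hcc] at this; linarith
  -- r^2 = S/2
  have hr2 : r^2 = (al * a + be * b + ga * cc) / 2 := by
    have h := hC0
    rw [hurep] at h
    simp only [inner_add_left, inner_add_right, real_inner_smul_left, real_inner_smul_right,
      hd', he', hf'] at h
    simp only [← ha, ← hb, ← hcc, ← hd, ← he, ← hf] at h
    linear_combination (-1) * h + al * hE1 + be * hE2 + ga * hE3
  -- main algebraic identity
  have hmain : rho a b cc (b+cc-2*f) (a+cc-2*e) (a+b-2*d)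
      = 2 * (al * a + be * b + ga * cc) * Delta a b cc (b+cc-2*f) (a+cc-2*e) (a+b-2*d) := by
    simp only [rho, Delta]
    linear_combination
      (-8*(a*(b*cc-f*f)+b*(e*f-cc*d)+cc*(d*f-b*e))) * hE1 +
      (-8*(a*(e*f-cc*d)+b*(a*cc-e*e)+cc*(d*e-a*f))) * hE2 +
      (-8*(a*(d*f-b*e)+b*(d*e-a*f)+cc*(a*b-d*d))) * hE3
  -- Delta is nonzero
  have hDne : Delta a b cc (b+cc-2*f) (a+cc-2*e) (a+b-2*d) ≠ 0 := by
    intro h0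
    have hdet0 : (!![a, d, e; d, b, f; e, f, cc]).det = 0 := by
      simp only [Delta] at h0
      simp [Matrix.det_fin_three]
      linear_combination h0 / 4
    obtain ⟨vv, hvv0, hkern⟩ := Matrix.exists_mulVec_eq_zero_iff.mpr hdet0
    have hk0 := congrFun hkern 0
    have hk1 := congrFun hkern 1
    have hk2 := congrFun hkern 2
    simp [Matrix.mulVec, dotProduct, Fin.sum_univ_three] at hk0 hk1 hk2
    have hz : vv 0 • w1 + vv 1 • w2 + vv 2 • w3 = 0 := by
      have hin : ⟪vv 0 • w1 + vv 1 • w2 + vv 2 • w3, vv 0 • w1 + vv 1 • w2 + vv 2 • w3⟫ = 0 := by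
        simp only [inner_add_left, inner_add_right, real_inner_smul_left, real_inner_smul_right,
          hd', he', hf']
        simp only [← ha, ← hb, ← hcc, ← hd, ← he, ← hf]
        linear_combination (vv 0) * hk0 + (vv 1) * hk1 + (vv 2) * hk2
      exact inner_self_eq_zero.mp hin
    have hall := Fintype.linearIndependent_iff.mp hindep vv (by
      simp [Fin.sum_univ_three]
      exact hz)
    apply hvv0
    funext i
    fin_cases i <;> simp [hall]
  -- conclude
  rw [hy1, hy2, hy3, hy4, hy5, hy6]
  have h4 : rho a b cc (b+cc-2*f) (a+cc-2*e) (a+b-2*d)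
      = (2*r)^2 * Delta a b cc (b+cc-2*f) (a+cc-2*e) (a+b-2*d) := by
    rw [hmain]
    linear_combination (-4 * Delta a b cc (b+cc-2*f) (a+cc-2*e) (a+b-2*d)) * hr2
  rw [h4, mul_div_assoc, div_self hDne, mul_one, Real.sqrt_sq (by linarith)]
  ring
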